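/- Let B be a finite block tree with height function h and confirmation depth d_c, let c* ≥ 1 be a natural number, and let h_max be a natural number. Suppose b' and b are distinct blocks with h(b') = h(b), every tip that is a descendant of b' has height strictly less than h_max + c*, and b has a descendant (tip or not) of height at least h_max. Then d_c(b') − d_c(b) < c*; in particular, b' is not c*-stable with respect to d_c. (This is the combinatorial core of the paper's Lemma that the probability of a state corruption for Bitcoin services requiring c* confirmations is negligible: a fork whose height exceeds the real blockchain's height by less than c* can never make one of its blocks appear c*-confirmed.) -/

import Mathlib

/-- A finite block tree: a finite set of blocks with a distinguished genesis
block `g` and a parent map `p` (extended to be total by setting `p g = g`)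
such that iterating `p` from any block eventually reaches `g`. -/
structure BlockTree (B : Type*) [Fintype B] [DecidableEq B] where
  g : B
  p : B → B
  root : p g = g
  reach : ∀ b : B, ∃ k : ℕ, p^[k] b = g

namespace BlockTree

variable {B : Type*} [Fintype B] [DecidableEq B] (T : BlockTree B)

/-- The successors of a block `b`: the blocks (other than genesis) whose parent is `b`. -/
def succ (b : B) : Finset B := Finset.univ.filter fun b' => b' ≠ T.g ∧ T.p b' = b

/-- A block is a tip if it has no successors. -/
def IsTip (b : B) : Prop := T.succ b = ∅

/-- `h` is the height function: the number of iterations of the parent map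
needed to reach the genesis block. -/
def IsHeight (h : B → ℕ) : Prop :=
  h T.g = 0 ∧ ∀ b : B, b ≠ T.g → h b = h (T.p b) + 1

/-- `d` is the depth function associated with the cost function `c`:
`d b = c b` if `b` is a tip, and `d b = c b + max_{b' ∈ succ b} d b'` otherwise. -/
def IsDepth (c : B → ℝ) (d : B → ℝ) : Prop :=
  ∀ b : B, (T.succ b = ∅ → d b = c b) ∧
    ∀ hne : (T.succ b).Nonempty, d b = c b + (T.succ b).sup' hne d

/-- `b''` is a descendant of `b` if iterating the parent map from `b''` reaches
`b` in zero or more steps. -/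
def Descendant (b'' b : B) : Prop := ∃ k : ℕ, (T.p)^[k] b'' = b

/-- A block `b` is `δ`-stable with respect to the depth function `d` and the
height function `h` if `d b ≥ δ` and `d b - d b' ≥ δ` for every block `b' ≠ b`
at the same height. -/
def Stable (_T : BlockTree B) (d : B → ℝ) (h : B → ℕ) (δ : ℝ) (b : B) : Prop :=
  d b ≥ δ ∧ ∀ b' : B, b' ≠ b → h b' = h b → d b - d b' ≥ δ

end BlockTree


/-!
The confirmation depth satisfies `d b ≥ d b₁ + 1` for every successor `b₁` of `b`, so
`d + h` can only grow towards the root: `b` is at least as deep as `h b'' - h b + 1` for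
any descendant `b''`, in particular `d b ≥ h_max - h b + 1`. Conversely, by induction
from the tips, a block all of whose tip descendants lie below height `M` has depth at
most `M - h b`. At equal heights the two bounds differ by at most `c* - 1`.
-/

namespace BlockTree

variable {B : Type*} [Fintype B] [DecidableEq B] (T : BlockTree B) {h : B → ℕ}

theorem mem_succ_iff {b₁ b : B} : b₁ ∈ T.succ b ↔ b₁ ≠ T.g ∧ T.p b₁ = b := by
  simp [succ]

theorem mem_succ_parent {b : B} (hb : b ≠ T.g) : b ∈ T.succ (T.p b) :=
  (T.mem_succ_iff).2 ⟨hb, rfl⟩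

theorem IsHeight.eq_of_mem_succ (hh : T.IsHeight h) {b₁ b : B} (hb : b₁ ∈ T.succ b) :
    h b₁ = h b + 1 := by
  obtain ⟨hg, rfl⟩ := (T.mem_succ_iff).1 hb
  exact hh.2 b₁ hg

/-- Induction from the tips towards the root: well-founded because heights strictly
increase along `succ` and `B` is finite. -/
theorem IsHeight.succ_induction (hh : T.IsHeight h) {P : B → Prop}
    (step : ∀ b, (∀ b₁ ∈ T.succ b, P b₁) → P b) (b : B) : P b :=
  (Finite.wellFounded_of_trans_of_irrefl (InvImage (· > ·) h)).induction b fun b ih =>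
    step b fun b₁ hb₁ => ih b₁ (by simp [InvImage, hh.eq_of_mem_succ T hb₁])

theorem Descendant.refl (b : B) : T.Descendant b b := ⟨0, rfl⟩

theorem Descendant.of_mem_succ {t b₁ b : B} (ht : T.Descendant t b₁) (hb₁ : b₁ ∈ T.succ b) :
    T.Descendant t b := by
  obtain ⟨k, rfl⟩ := ht
  exact ⟨k + 1, by rw [Function.iterate_succ_apply', ((T.mem_succ_iff).1 hb₁).2]⟩

variable {c d : B → ℝ}

theorem IsDepth.add_le_of_mem_succ (hd : T.IsDepth c d) {b₁ b : B} (hb₁ : b₁ ∈ T.succ b) :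
    c b + d b₁ ≤ d b := by
  rw [(hd b).2 ⟨b₁, hb₁⟩]
  exact add_le_add_right (Finset.le_sup' d hb₁) _

theorem IsDepth.cost_le (hh : T.IsHeight h) (hd : T.IsDepth c d) (hc : ∀ b, 0 ≤ c b)
    (b : B) : c b ≤ d b := by
  induction b using hh.succ_induction T with
  | step b ih =>
    rcases (T.succ b).eq_empty_or_nonempty with htip | ⟨b₁, hb₁⟩
    · exact ((hd b).1 htip).ge
    · linarith [hd.add_le_of_mem_succ T hb₁, ih b₁ hb₁, hc b₁]

theorem IsDepth.add_height_le_of_descendant (hh : T.IsHeight h) (hd : T.IsDepth (fun _ => 1) d)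
    {b'' b : B} (hdesc : T.Descendant b'' b) : d b'' + h b'' ≤ d b + h b := by
  obtain ⟨k, rfl⟩ := hdesc
  induction k generalizing b'' with
  | zero => rfl
  | succ k ih =>
    rw [Function.iterate_succ_apply]
    refine le_trans ?_ ih
    by_cases hg : b'' = T.g
    · rw [hg, T.root]
    · have hstep := hd.add_le_of_mem_succ T (T.mem_succ_parent hg)
      rw [hh.2 b'' hg]
      push_cast
      linarith

theorem IsDepth.le_sub_height_of_tips (hh : T.IsHeight h) (hd : T.IsDepth (fun _ => 1) d)
    (M : ℕ) (b : B) (htips : ∀ t, T.IsTip t → T.Descendant t b → h t < M) :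
    d b ≤ M - h b := by
  induction b using hh.succ_induction T with
  | step b ih =>
    rcases (T.succ b).eq_empty_or_nonempty with htip | hne
    · have hlt : (h b : ℝ) + 1 ≤ M := by exact_mod_cast htips b htip (Descendant.refl T b)
      rw [(hd b).1 htip]
      linarith
    · rw [(hd b).2 hne]
      suffices (T.succ b).sup' hne d ≤ M - h b - 1 by linarith
      refine Finset.sup'_le _ _ fun b₁ hb₁ => ?_
      have hb₁le := ih b₁ hb₁ fun t ht hdesc => htips t ht (hdesc.of_mem_succ T hb₁)
      rw [hh.eq_of_mem_succ T hb₁] at hb₁le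
      push_cast at hb₁le
      linarith

end BlockTree

theorem fork_not_cstar_stable_general
    {B : Type*} [Fintype B] [DecidableEq B] (T : BlockTree B)
    (dc : B → ℝ) (h : B → ℕ)
    (hh : T.IsHeight h) (hd : T.IsDepth (fun _ => 1) dc)
    (cstar : ℕ) (hmax : ℕ)
    (b' b : B) (hne : b' ≠ b) (hbb' : h b' = h b)
    (htips : ∀ t : B, T.IsTip t → T.Descendant t b' → h t < hmax + cstar)
    (hdesc : ∃ b'' : B, T.Descendant b'' b ∧ hmax ≤ h b'') :
    dc b' - dc b < (cstar : ℝ) ∧ ¬ T.Stable dc h (cstar : ℝ) b' := by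
  obtain ⟨b'', hb''b, hb''⟩ := hdesc
  have upper := hd.le_sub_height_of_tips T hh (hmax + cstar) b' htips
  have lower := hd.add_height_le_of_descendant T hh hb''b
  have one_le := hd.cost_le T hh (fun _ => zero_le_one) b''
  have hb''R : (hmax : ℝ) ≤ h b'' := by exact_mod_cast hb''
  have hbb'R : (h b' : ℝ) = h b := by exact_mod_cast hbb'
  have hlt : dc b' - dc b < cstar := by
    push_cast at upper
    linarith
  exact ⟨hlt, fun hst => (hst.2 b hne.symm hbb'.symm).not_gt hlt⟩

/-- If `b'` and `b` are distinct blocks at the same height, every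
tip descending from `b'` has height strictly less than `h_max + c*`, and `b`
has a descendant of height at least `h_max`, then
`d_c b' - d_c b < c*`; in particular `b'` is not `c*`-stable with respect to
the confirmation depth `d_c`. -/
theorem fork_not_cstar_stable
    {B : Type*} [Fintype B] [DecidableEq B] (T : BlockTree B)
    (dc : B → ℝ) (h : B → ℕ)
    (hh : T.IsHeight h) (hd : T.IsDepth (fun _ => 1) dc)
    (cstar : ℕ) (hcstar : 1 ≤ cstar) (hmax : ℕ)
    (b' b : B) (hne : b' ≠ b) (hbb' : h b' = h b)
    (htips : ∀ t : B, T.IsTip t → T.Descendant t b' → h t < hmax + cstar)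
    (hdesc : ∃ b'' : B, T.Descendant b'' b ∧ hmax ≤ h b'') :
    dc b' - dc b < (cstar : ℝ) ∧ ¬ T.Stable dc h (cstar : ℝ) b' :=
  fork_not_cstar_stable_general T dc h hh hd cstar hmax b' b hne hbb' htips hdesc
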